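/- Let K ≥ 1 and let D_1, …, D_K be mutually independent nonnegative real random variables such that D_t has probability density f_t(r) = 2π λ_t r exp(−π λ_t r²) on r ≥ 0. Set Ξ = Σ_{t=1}^{K} λ_t P_t^{2/α}. Then for every tier index k and every x ≥ 0, the joint probability P( D_k ≤ x and for all t ≠ k, P_k D_k^{−α} > P_t D_t^{−α} ) equals ∫_0^x 2π λ_k r exp(−π Ξ r² / P_k^{2/α}) dr. Equivalently, conditioned on the association event {for all t ≠ k, P_k D_k^{−α} > P_t D_t^{−α}}, the distance D_k has density f_{D_k}(r) = (2π λ_k r / A_k) exp(−π Ξ r² / P_k^{2/α}) with A_k = λ_k P_k^{2/α}/Ξ. -/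

import Mathlib

/-!
Condition on the tier-`k` distance `D_k = r`. The association event then asks, independently for
each `t ≠ k`, that `D_t > (P_t / P_k)^{1/α} r`, and the Rayleigh tail gives this probability
`exp (-π λ_t (P_t / P_k)^{2/α} r²)`. Multiplying these tails with the density of `D_k` collects
the exponents into `-π Ξ r² / P_k^{2/α}`, and integrating over `r ≤ x` gives the claim.
-/

open MeasureTheory ProbabilityTheory Real Set Filter
open scoped ENNReal Topology

theorem hasDerivAt_neg_exp_neg_mul_sq (l s : ℝ) :
    HasDerivAt (fun u => -exp (-(π * l * u ^ 2))) (2 * π * l * s * exp (-(π * l * s ^ 2))) s := by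
  refine (((hasDerivAt_pow 2 s).const_mul (π * l)).neg.exp).neg.congr_deriv ?_
  simp only [Pi.neg_apply, Nat.cast_ofNat]
  ring

theorem tendsto_neg_exp_neg_mul_sq {l : ℝ} (hl : 0 < l) :
    Tendsto (fun s => -exp (-(π * l * s ^ 2))) atTop (𝓝 0) := by
  have : Tendsto (fun s : ℝ => -(π * l * s ^ 2)) atTop atBot :=
    tendsto_neg_atTop_atBot.comp ((tendsto_pow_atTop two_ne_zero).const_mul_atTop (by positivity))
  simpa using (tendsto_exp_atBot.comp this).neg

theorem mul_rpow_neg_lt_mul_rpow_neg_iff {a b β r s : ℝ} (ha : 0 < a) (hb : 0 < b) (hβ : 0 < β)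
    (hr : 0 < r) (hs : 0 < s) : a * s ^ (-β) < b * r ^ (-β) ↔ (a / b) ^ β⁻¹ * r < s := by
  rw [← rpow_lt_rpow_iff (by positivity) hs.le hβ, mul_rpow (by positivity) hr.le,
    rpow_inv_rpow (div_pos ha hb).le hβ.ne', rpow_neg hs.le, rpow_neg hr.le,
    div_mul_eq_mul_div, div_lt_iff₀ hb,
    show a * (s ^ β)⁻¹ = a * r ^ β / s ^ β * (r ^ β)⁻¹ by field_simp,
    mul_lt_mul_iff_of_pos_right (inv_pos.2 (rpow_pos_of_pos hr β)),
    div_lt_iff₀' (rpow_pos_of_pos hs β)]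

noncomputable def rayleighDensity (l r : ℝ) : ℝ≥0∞ :=
  ENNReal.ofReal (if 0 ≤ r then 2 * π * l * r * exp (-(π * l * r ^ 2)) else 0)

noncomputable def rayleighMeasure (l : ℝ) : Measure ℝ :=
  volume.withDensity (rayleighDensity l)

instance (l : ℝ) : SigmaFinite (rayleighMeasure l) :=
  SigmaFinite.withDensity_ofReal _

section Rayleigh

variable {l : ℝ}

theorem measurable_rayleighDensity : Measurable (rayleighDensity l) :=
  (Measurable.ite measurableSet_Ici (by fun_prop) measurable_const).ennreal_ofReal

theorem rayleighDensity_of_nonpos {r : ℝ} (hr : r ≤ 0) : rayleighDensity l r = 0 := by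
  rcases hr.lt_or_eq with hr | rfl
  · simp [rayleighDensity, hr.not_ge]
  · simp [rayleighDensity]

theorem lintegral_Ioi_rayleigh (hl : 0 < l) {a : ℝ} (ha : 0 ≤ a) :
    ∫⁻ s in Ioi a, ENNReal.ofReal (2 * π * l * s * exp (-(π * l * s ^ 2))) =
      ENNReal.ofReal (exp (-(π * l * a ^ 2))) := by
  have hcont : ContinuousWithinAt (fun u => -exp (-(π * l * u ^ 2))) (Ici a) a := by
    fun_prop
  have hderiv := fun s (_ : s ∈ Ioi a) => hasDerivAt_neg_exp_neg_mul_sq l s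
  have hnonneg : ∀ s ∈ Ioi a, 0 ≤ 2 * π * l * s * exp (-(π * l * s ^ 2)) := fun s hs => by
    have : 0 ≤ s := ha.trans hs.le
    positivity
  rw [← ofReal_integral_eq_lintegral_ofReal
      (integrableOn_Ioi_deriv_of_nonneg hcont hderiv hnonneg (tendsto_neg_exp_neg_mul_sq hl))
      ((ae_restrict_iff' measurableSet_Ioi).2 (.of_forall hnonneg)),
    integral_Ioi_of_hasDerivAt_of_nonneg hcont hderiv hnonneg (tendsto_neg_exp_neg_mul_sq hl)]
  simp

theorem rayleighMeasure_Iic_zero : rayleighMeasure l (Iic 0) = 0 := by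
  rw [rayleighMeasure, withDensity_apply _ measurableSet_Iic]
  exact (setLIntegral_congr_fun measurableSet_Iic fun _ hr => rayleighDensity_of_nonpos hr).trans
    lintegral_zero

theorem rayleighMeasure_Ioi (hl : 0 < l) {a : ℝ} (ha : 0 ≤ a) :
    rayleighMeasure l (Ioi a) = ENNReal.ofReal (exp (-(π * l * a ^ 2))) := by
  rw [rayleighMeasure, withDensity_apply _ measurableSet_Ioi, ← lintegral_Ioi_rayleigh hl ha]
  refine setLIntegral_congr_fun measurableSet_Ioi fun s hs => ?_
  rw [rayleighDensity, if_pos (ha.trans hs.le)]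

theorem rayleighMeasure_mul_rpow_neg_lt (hl : 0 < l) {a b β r : ℝ} (ha : 0 < a) (hb : 0 < b)
    (hβ : 0 < β) (hr : 0 < r) :
    rayleighMeasure l {s | a * s ^ (-β) < b * r ^ (-β)} =
      ENNReal.ofReal (exp (-(π * l * (a / b) ^ (2 / β) * r ^ 2))) := by
  have hcap : {s | a * s ^ (-β) < b * r ^ (-β)} ∩ Ioi 0 = Ioi ((a / b) ^ β⁻¹ * r) := by
    ext s
    simp only [mem_inter_iff, mem_ofPred_eq, mem_Ioi]
    refine ⟨fun ⟨h, hs⟩ => (mul_rpow_neg_lt_mul_rpow_neg_iff ha hb hβ hr hs).1 h, fun h => ?_⟩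
    have hs : 0 < s := lt_trans (by positivity) h
    exact ⟨(mul_rpow_neg_lt_mul_rpow_neg_iff ha hb hβ hr hs).2 h, hs⟩
  -- `s ^ (-β)` is junk for `s ≤ 0`, but the Rayleigh law does not charge `Iic 0`.
  rw [← measure_inter_conull (t := Ioi 0) (by rw [compl_Ioi]; exact rayleighMeasure_Iic_zero),
    hcap, rayleighMeasure_Ioi hl (by positivity), mul_pow, ← rpow_natCast,
    ← rpow_mul (div_pos ha hb).le]
  norm_num [div_eq_mul_inv, mul_comm, mul_left_comm, mul_assoc]

end Rayleigh

theorem ProbabilityTheory.iIndepFun.map_prodMk_eq_prod_pi {Ω ι β : Type*} [MeasurableSpace Ω]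
    [MeasurableSpace β] {μ : Measure Ω} [Fintype ι] [DecidableEq ι] {f : ι → Ω → β}
    (hf : iIndepFun f μ) (hmeas : ∀ i, Measurable (f i)) (k : ι) :
    μ.map (fun ω => (f k ω, fun i : {i // i ≠ k} => f i ω)) =
      (μ.map (f k)).prod (Measure.pi fun i : {i // i ≠ k} => μ.map (f i)) := by
  have := hf.isProbabilityMeasure
  have hdisj : Disjoint {k} (Finset.univ.erase k) :=
    Finset.disjoint_singleton_left.2 (Finset.notMem_erase k _)
  have hindep : IndepFun (f k) (fun ω (i : {i // i ≠ k}) => f i ω) μ :=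
    (hf.indepFun_finset _ _ hdisj hmeas).comp
      (measurable_pi_apply (⟨k, Finset.mem_singleton_self k⟩ : ({k} : Finset ι)))
      (measurable_pi_lambda (fun (y : ↥(Finset.univ.erase k) → β) (i : {i // i ≠ k}) =>
        y ⟨i, Finset.mem_erase.2 ⟨i.2, Finset.mem_univ _⟩⟩) fun _ => measurable_pi_apply _)
  rw [(indepFun_iff_map_prod_eq_prod_map_map (hmeas k).aemeasurable (by fun_prop)).1 hindep,
    (hf.precomp Subtype.val_injective).map_fun_eq_pi_map fun _ => (hmeas _).aemeasurable]

theorem exp_neg_mul_prod_subtype_ne {ι : Type*} [Fintype ι] [DecidableEq ι] (lam P : ι → ℝ)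
    (hP : ∀ t, 0 < P t) (k : ι) (β r : ℝ) :
    exp (-(π * lam k * r ^ 2)) * ∏ t : {t // t ≠ k}, exp (-(π * lam t * (P t / P k) ^ β * r ^ 2)) =
      exp (-(π * (∑ t, lam t * P t ^ β) * r ^ 2 / P k ^ β)) := by
  have hsum : ∑ t, lam t * (P t / P k) ^ β = (∑ t, lam t * P t ^ β) / P k ^ β := by
    simp_rw [Finset.sum_div, div_rpow (hP _).le (hP k).le, mul_div_assoc]
  calc _ = ∏ t, exp (-(π * lam t * (P t / P k) ^ β * r ^ 2)) := by
        rw [Fintype.prod_eq_mul_prod_subtype_ne _ k, div_self (hP k).ne', one_rpow, mul_one]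
    _ = exp (-(π * (∑ t, lam t * (P t / P k) ^ β) * r ^ 2)) := by
        rw [← exp_sum, Finset.mul_sum, Finset.sum_mul, ← Finset.sum_neg_distrib]
        simp only [mul_assoc]
    _ = _ := by rw [hsum]; ring_nf

theorem rayleighDensity_mul_prod_subtype_ne {ι : Type*} [Fintype ι] [DecidableEq ι]
    {lam P : ι → ℝ} (hlam : ∀ t, 0 < lam t) (hP : ∀ t, 0 < P t) {α : ℝ} (hα : 0 < α) (k : ι)
    {r : ℝ} (hr : 0 < r) :
    rayleighDensity (lam k) r *
        ∏ t : {t // t ≠ k}, rayleighMeasure (lam t) {s | P t * s ^ (-α) < P k * r ^ (-α)} =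
      ENNReal.ofReal (2 * π * lam k * r *
        exp (-(π * (∑ t, lam t * P t ^ (2 / α)) * r ^ 2 / P k ^ (2 / α)))) := by
  simp_rw [rayleighMeasure_mul_rpow_neg_lt (hlam _) (hP _) (hP k) hα hr, rayleighDensity,
    if_pos hr.le, ← ENNReal.ofReal_prod_of_nonneg fun _ _ => (exp_pos _).le]
  rw [← ENNReal.ofReal_mul (by have := hlam k; positivity), mul_assoc,
    exp_neg_mul_prod_subtype_ne lam P hP]

def servingSet {ι : Type*} (P : ι → ℝ) (α : ℝ) (k : ι) (x : ℝ) :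
    Set (ℝ × ({t // t ≠ k} → ℝ)) :=
  {p | p.1 ≤ x ∧ ∀ t : {t // t ≠ k}, P t * p.2 t ^ (-α) < P k * p.1 ^ (-α)}

section ServingSet

variable {ι : Type*} {P : ι → ℝ} {α : ℝ} {k : ι} {x : ℝ}

theorem measurableSet_servingSet [Countable ι] : MeasurableSet (servingSet P α k x) := by
  simp only [servingSet, ofPred_and, ofPred_forall]
  exact (measurableSet_le (by fun_prop) (by fun_prop)).inter
    (.iInter fun t => measurableSet_lt (by fun_prop) (by fun_prop))

theorem preimage_prodMk_servingSet (r : ℝ) :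
    Prod.mk r ⁻¹' servingSet P α k x =
      if r ≤ x then univ.pi fun t : {t // t ≠ k} => {s | P t * s ^ (-α) < P k * r ^ (-α)}
      else ∅ := by
  ext z
  split_ifs with hrx <;> simp [servingSet, hrx]

theorem rayleighDensity_mul_pi_servingSet [Fintype ι] [DecidableEq ι] {lam : ι → ℝ}
    (hlam : ∀ t, 0 < lam t) (hP : ∀ t, 0 < P t) (hα : 0 < α) (r : ℝ) :
    rayleighDensity (lam k) r * Measure.pi (fun t : {t // t ≠ k} => rayleighMeasure (lam t))
        (Prod.mk r ⁻¹' servingSet P α k x) =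
      (Ioc 0 x).indicator (fun r => ENNReal.ofReal (2 * π * lam k * r *
        exp (-(π * (∑ t, lam t * P t ^ (2 / α)) * r ^ 2 / P k ^ (2 / α))))) r := by
  rcases le_or_gt r 0 with hr | hr
  · rw [rayleighDensity_of_nonpos hr, zero_mul, indicator_of_notMem fun h => hr.not_gt h.1]
  rw [preimage_prodMk_servingSet]
  split_ifs with hrx
  · rw [Measure.pi_pi, indicator_of_mem (mem_Ioc.2 ⟨hr, hrx⟩)]
    exact rayleighDensity_mul_prod_subtype_ne hlam hP hα k hr
  · rw [measure_empty, mul_zero, indicator_of_notMem fun h => hrx h.2]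

end ServingSet

theorem serving_distance_distribution_general
    {Ω : Type*} [MeasurableSpace Ω] (μ : Measure Ω) [IsProbabilityMeasure μ]
    (K : ℕ) (lam P : Fin K → ℝ) (α : ℝ)
    (hlam : ∀ t, 0 < lam t) (hP : ∀ t, 0 < P t) (hα : 2 < α)
    (D : Fin K → Ω → ℝ) (hmeas : ∀ t, Measurable (D t))
    (hindep : iIndepFun D μ)
    (hdens : ∀ t, μ.map (D t) = volume.withDensity (fun r =>
      ENNReal.ofReal (if 0 ≤ r then 2 * π * lam t * r * Real.exp (-(π * lam t * r ^ 2)) else 0)))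
    (k : Fin K) (x : ℝ) :
    μ {ω | D k ω ≤ x ∧ ∀ t, t ≠ k → P k * D k ω ^ (-α) > P t * D t ω ^ (-α)} =
      ENNReal.ofReal (∫ r in Set.Ioc (0 : ℝ) x,
        2 * π * lam k * r *
          Real.exp (-(π * (∑ t, lam t * P t ^ (2 / α)) * r ^ 2 / P k ^ (2 / α)))) := by
  have hlaw : ∀ t, μ.map (D t) = rayleighMeasure (lam t) := hdens
  have hevent : {ω | D k ω ≤ x ∧ ∀ t, t ≠ k → P k * D k ω ^ (-α) > P t * D t ω ^ (-α)} =
      (fun ω => (D k ω, fun t : {t // t ≠ k} => D t ω)) ⁻¹' servingSet P α k x := by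
    ext ω
    simp [servingSet]
  rw [hevent, ← Measure.map_apply (by fun_prop) measurableSet_servingSet,
    hindep.map_prodMk_eq_prod_pi hmeas k, Measure.prod_apply measurableSet_servingSet]
  simp only [hlaw]
  rw [rayleighMeasure, lintegral_withDensity_eq_lintegral_mul _ measurable_rayleighDensity
    (measurable_measure_prodMk_left measurableSet_servingSet)]
  simp only [Pi.mul_apply, rayleighDensity_mul_pi_servingSet hlam hP (by linarith : 0 < α)]
  rw [lintegral_indicator measurableSet_Ioc,
    ofReal_integral_eq_lintegral_ofReal (Continuous.integrableOn_Ioc (by fun_prop))]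
  refine (ae_restrict_iff' measurableSet_Ioc).2 (.of_forall fun r hr => ?_)
  have := hlam k
  have := hr.1.le
  positivity

/-- Lemma 2 (serving-distance distribution): if `D_1, …, D_K` are mutually independent
nonnegative random variables, `D_t` having density `f_t(r) = 2π λ_t r exp(−π λ_t r²)` on
`r ≥ 0`, and `Ξ = Σ_t λ_t P_t^{2/α}`, then for every tier `k` and every `x ≥ 0`,
`P(D_k ≤ x ∧ ∀ t ≠ k, P_k D_k^{−α} > P_t D_t^{−α})
  = ∫_0^x 2π λ_k r exp(−π Ξ r²/P_k^{2/α}) dr`,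
i.e. conditioned on association to tier `k`, the serving distance has density
`(2π λ_k r / A_k) exp(−π Ξ r²/P_k^{2/α})` with `A_k = λ_k P_k^{2/α}/Ξ`. -/
theorem serving_distance_distribution
    {Ω : Type*} [MeasurableSpace Ω] (μ : Measure Ω) [IsProbabilityMeasure μ]
    (K : ℕ) (hK : 1 ≤ K) (lam P : Fin K → ℝ) (α : ℝ)
    (hlam : ∀ t, 0 < lam t) (hP : ∀ t, 0 < P t) (hα : 2 < α)
    (D : Fin K → Ω → ℝ) (hmeas : ∀ t, Measurable (D t))
    (hpos : ∀ t ω, 0 ≤ D t ω)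
    (hindep : iIndepFun D μ)
    (hdens : ∀ t, μ.map (D t) = volume.withDensity (fun r =>
      ENNReal.ofReal (if 0 ≤ r then 2 * π * lam t * r * Real.exp (-(π * lam t * r ^ 2)) else 0)))
    (k : Fin K) (x : ℝ) (hx : 0 ≤ x) :
    μ {ω | D k ω ≤ x ∧ ∀ t, t ≠ k → P k * D k ω ^ (-α) > P t * D t ω ^ (-α)} =
      ENNReal.ofReal (∫ r in Set.Ioc (0 : ℝ) x,
        2 * π * lam k * r *
          Real.exp (-(π * (∑ t, lam t * P t ^ (2 / α)) * r ^ 2 / P k ^ (2 / α)))) :=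
  serving_distance_distribution_general μ K lam P α hlam hP hα D hmeas hindep hdens k x
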